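/- arXiv:2006.14733 — 5 statements merged into one kernel-verified Lean document; each statement's English description precedes it below -/
import Mathlib

section
/- If a graph G on a finite vertex set can be burned in t rounds by the k-burning process, then the t-th power graph G^t has a dominating set of size at most k·t. -/
/-- The `r`-th power of a graph: distinct vertices are adjacent iff their
distance in `G` is (finite and) at most `r`. -/
def SimpleGraph.power {V : Type*} (G : SimpleGraph V) (r : ℕ) : SimpleGraph V where
  Adj u v := u ≠ v ∧ G.Reachable u v ∧ G.dist u v ≤ r
  symm := ⟨fun u v ⟨h1, h2, h3⟩ => ⟨h1.symm, h2.symm, by rwa [SimpleGraph.dist_comm]⟩⟩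
  loopless := ⟨fun v h => h.1 rfl⟩

/-- `D` is a dominating set of `H`. -/
def SimpleGraph.DomSet {V : Type*} (H : SimpleGraph V) (D : Finset V) : Prop :=
  ∀ v : V, v ∈ D ∨ ∃ u ∈ D, H.Adj u v

/-- `M` is an independent set of `H`. -/
def SimpleGraph.IndepFinset {V : Type*} (H : SimpleGraph V) (M : Finset V) : Prop :=
  ∀ u ∈ M, ∀ v ∈ M, ¬ H.Adj u v

/-- `M` is a maximal independent set of `H`. -/
def SimpleGraph.MaxIndepFinset {V : Type*} (H : SimpleGraph V) (M : Finset V) : Prop :=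
  H.IndepFinset M ∧ ∀ v, v ∉ M → ∃ u ∈ M, H.Adj u v

/-- `G` can be burned within `t` rounds of the `k`-burning process:
there are source sets `s 0, …, s (t-1)` (at most `k` sources per round,
the sources of round `i+1` being `s i`) such that every vertex is within
distance `t - 1 - i` of a source chosen at round `i + 1`. -/
def SimpleGraph.kBurnableIn {V : Type*} (G : SimpleGraph V) (k t : ℕ) : Prop :=
  ∃ s : Fin t → Finset V, (∀ i, (s i).card ≤ k) ∧
    ∀ v : V, ∃ i : Fin t, ∃ u ∈ s i, G.Reachable u v ∧ G.dist u v ≤ t - 1 - i.val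

/-- The `k`-burning number of `G`. -/
noncomputable def SimpleGraph.burningNumber {V : Type*} (G : SimpleGraph V) (k : ℕ) : ℕ :=
  sInf {t | G.kBurnableIn k t}

theorem SimpleGraph.domSet_power_of_forall_exists_dist_le {V : Type*} {G : SimpleGraph V}
    {D : Finset V} {r : ℕ} (hD : ∀ v, ∃ u ∈ D, G.Reachable u v ∧ G.dist u v ≤ r) :
    (G.power r).DomSet D := by
  intro v
  obtain ⟨u, hu, hreach, hdist⟩ := hD v
  by_cases huv : u = v
  · exact .inl (huv ▸ hu)
  · exact .inr ⟨u, hu, huv, hreach, hdist⟩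

theorem stmt1_general {V : Type*} [DecidableEq V] (G : SimpleGraph V) (k t : ℕ)
    (h : G.kBurnableIn k t) :
    ∃ D : Finset V, (G.power t).DomSet D ∧ D.card ≤ k * t := by
  obtain ⟨s, hcard, hcover⟩ := h
  refine ⟨Finset.univ.biUnion s, G.domSet_power_of_forall_exists_dist_le fun v => ?_, ?_⟩
  · obtain ⟨i, u, hu, hreach, hdist⟩ := hcover v
    exact ⟨u, Finset.mem_biUnion.2 ⟨i, Finset.mem_univ i, hu⟩, hreach, hdist.trans (by omega)⟩
  · calc (Finset.univ.biUnion s).card ≤ Finset.univ.card * k :=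
          Finset.card_biUnion_le_card_mul _ _ _ fun i _ => hcard i
      _ = k * t := by rw [Finset.card_univ, Fintype.card_fin, mul_comm]

/-- If `G` can be burned in `t` rounds by the `k`-burning process,
then `G^t` has a dominating set of size at most `k * t`. -/
theorem stmt1 {V : Type*} [Fintype V] [DecidableEq V] (G : SimpleGraph V) (k t : ℕ)
    (h : G.kBurnableIn k t) :
    ∃ D : Finset V, (G.power t).DomSet D ∧ D.card ≤ k * t :=
  stmt1_general G k t h
end

section
/- Let G be a graph on a finite vertex set, and suppose M is a set of vertices of size at most j such that every vertex of G is within distance 2j (in G) of some vertex of M. Then G can be burned in at most 3j rounds by the 1-burning process using the vertices of M (in any order) as the first |M| burning sources. -/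
/-- Burn `l[i]` at round `i + 1` and nothing from round `l.length + 1` on: the source `l[i]`
then spreads for `t - 1 - i ≥ t - l.length` rounds. -/
theorem SimpleGraph.kBurnableIn_one_of_forall_dist_le {V : Type*} (G : SimpleGraph V) {t : ℕ}
    (l : List V) (hlen : l.length ≤ t)
    (hcov : ∀ v, ∃ u ∈ l, G.Reachable u v ∧ G.dist u v ≤ t - l.length) :
    G.kBurnableIn 1 t := by
  refine ⟨fun i => l[i.val]?.toFinset, fun i => ?_, fun v => ?_⟩
  · rw [Option.card_toFinset]
    cases l[i.val]? <;> simp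
  · obtain ⟨u, hul, hreach, hdist⟩ := hcov v
    obtain ⟨n, hn, rfl⟩ := List.mem_iff_getElem.mp hul
    refine ⟨⟨n, by omega⟩, l[n], ?_, hreach, by dsimp only; omega⟩
    simp [List.getElem?_eq_getElem hn]

theorem stmt4_general {V : Type*} (G : SimpleGraph V) (j : ℕ)
    (M : Finset V) (hMcard : M.card ≤ j)
    (hdom : ∀ v : V, ∃ u ∈ M, G.Reachable u v ∧ G.dist u v ≤ 2 * j) :
    G.kBurnableIn 1 (3 * j) := by
  refine G.kBurnableIn_one_of_forall_dist_le M.toList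
    (by rw [Finset.length_toList]; omega) fun v => ?_
  obtain ⟨u, huM, hreach, hdist⟩ := hdom v
  exact ⟨u, Finset.mem_toList.mpr huM, hreach, by rw [Finset.length_toList]; omega⟩

/-- if `M` has size at most `j` and every vertex is within distance
`2j` of `M`, then `G` can be 1-burned in at most `3j` rounds using `M` as the
initial sources. -/
theorem stmt4 {V : Type*} [Fintype V] [DecidableEq V] (G : SimpleGraph V) (j : ℕ)
    (M : Finset V) (hMcard : M.card ≤ j)
    (hdom : ∀ v : V, ∃ u ∈ M, G.Reachable u v ∧ G.dist u v ≤ 2 * j) :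
    G.kBurnableIn 1 (3 * j) :=
  stmt4_general G j M hMcard hdom
end

section
/- Let G be a connected graph with burning number b(G) = t, and let M be any maximal independent set in the graph G^{2t} (vertices adjacent iff G-distance at most 2t). Then |M| ≤ t. -/
/-!
Fix a burning sequence with one source per round. Every vertex lies within distance `t - 1`
of some source, so two vertices assigned to the same source are at distance at most
`2 (t - 1) ≤ 2t`, i.e. adjacent in `G^{2t}`. Hence an independent set of `G^{2t}` maps
injectively to the at most `t` sources.
-/

namespace SimpleGraph

variable {V : Type*} {G : SimpleGraph V}

lemma power_mono {r r' : ℕ} (h : r ≤ r') : G.power r ≤ G.power r' :=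
  fun _ _ ⟨hne, hre, hd⟩ => ⟨hne, hre, hd.trans h⟩

lemma power_adj_of_dist_le {u x y : V} {d : ℕ} (hne : x ≠ y)
    (hx : G.Reachable u x) (hy : G.Reachable u y)
    (hdx : G.dist u x ≤ d) (hdy : G.dist u y ≤ d) : (G.power (2 * d)).Adj x y := by
  refine ⟨hne, hx.symm.trans hy, ?_⟩
  calc G.dist x y ≤ G.dist x u + G.dist u y := hx.symm.dist_triangle_left y
    _ = G.dist u x + G.dist u y := by rw [dist_comm]
    _ ≤ 2 * d := by omega

lemma kBurnableIn_card [Fintype V] {k : ℕ} (hk : 1 ≤ k) : G.kBurnableIn k (Fintype.card V) := by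
  let e : Fin (Fintype.card V) ≃ V := (Fintype.equivFin V).symm
  refine ⟨fun i => {e i}, fun i => by simpa using hk, fun v => ⟨e.symm v, v, by simp, .refl v, ?_⟩⟩
  simp

lemma kBurnableIn_burningNumber [Fintype V] {k : ℕ} (hk : 1 ≤ k) :
    G.kBurnableIn k (G.burningNumber k) :=
  Nat.sInf_mem (s := {t | G.kBurnableIn k t}) ⟨_, kBurnableIn_card hk⟩

theorem card_le_of_kBurnableIn_of_indepFinset_power {k t r : ℕ} (hb : G.kBurnableIn k t)
    (hr : 2 * (t - 1) ≤ r) {M : Finset V} (hM : (G.power r).IndepFinset M) :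
    M.card ≤ t * k := by
  classical
  obtain ⟨s, hcard, hcov⟩ := hb
  choose round source hsource hreach hdist using hcov
  have hdist' (x : V) : G.dist (source x) x ≤ t - 1 := (hdist x).trans (by omega)
  have hinj : Set.InjOn source M := by
    intro x hx y hy hxy
    by_contra hne
    refine hM x hx y hy (power_mono hr ?_)
    exact power_adj_of_dist_le hne (hreach x) (hxy ▸ hreach y) (hdist' x) (hxy ▸ hdist' y)
  calc M.card ≤ (Finset.univ.biUnion s).card :=
        Finset.card_le_card_of_injOn source
          (fun x _ => Finset.mem_biUnion.mpr ⟨round x, Finset.mem_univ _, hsource x⟩) hinj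
    _ ≤ Finset.univ.card * k := Finset.card_biUnion_le_card_mul _ _ _ fun i _ => hcard i
    _ = t * k := by rw [Finset.card_univ, Fintype.card_fin]

end SimpleGraph

theorem stmt6_general {V : Type*} [Fintype V] (G : SimpleGraph V)
    (t : ℕ) (ht : G.burningNumber 1 = t)
    (M : Finset V) (hM : (G.power (2 * t)).MaxIndepFinset M) :
    M.card ≤ t := by
  have hb : G.kBurnableIn 1 t := ht ▸ G.kBurnableIn_burningNumber le_rfl
  simpa using G.card_le_of_kBurnableIn_of_indepFinset_power hb (by omega) hM.1

/-- if `G` is connected with burning number `t`, then any maximal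
independent set of `G^{2t}` has size at most `t`. -/
theorem stmt6 {V : Type*} [Fintype V] [DecidableEq V] (G : SimpleGraph V)
    (hconn : G.Connected) (t : ℕ) (ht : G.burningNumber 1 = t)
    (M : Finset V) (hM : (G.power (2 * t)).MaxIndepFinset M) :
    M.card ≤ t :=
  stmt6_general G t ht M hM
end

section
/- Let G be a graph on n vertices and let j be the smallest positive integer such that some maximal independent set M_{j} of G^{2j} satisfies |M_{j}| ≤ j. Then j ≤ b(G) and burning the vertices of M_j as sources (in any order) burns all of G within |M_j| + 2j ≤ 3j ≤ 3·b(G) rounds. Hence the burning number is 3-approximable by this procedure. -/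
/-!
A burning schedule with at most `k` sources per round that finishes in `t` rounds covers `G` by
balls of radius at most `t - 1` around at most `k t` sources, so an independent set of `G^{2t}`
meets each ball at most once and has at most `k t` elements. Hence if `G` burned in `t < j` rounds,
every independent set of `G^{2t}` would have at most `t` elements, and so would some maximal one,
contradicting the minimality of `j`. Conversely, a maximal independent set `M` of `G^{2j}`
dominates `G^{2j}`; lighting its vertices one per round, every vertex lies within distance `2j` of
a source that burns for at least `2j` rounds.
-/

namespace SimpleGraph

variable {V : Type*}

theorem IndepFinset.insert [DecidableEq V] {H : SimpleGraph V} {M : Finset V} {v : V}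
    (hM : H.IndepFinset M) (hv : ∀ u ∈ M, ¬ H.Adj u v) : H.IndepFinset (insert v M) := by
  intro a ha b hb hab
  rw [Finset.mem_insert] at ha hb
  rcases ha with rfl | ha <;> rcases hb with rfl | hb
  · exact H.loopless.irrefl _ hab
  · exact hv b hb hab.symm
  · exact hv a ha hab
  · exact hM a ha b hb hab

/-- An independent finset of maximum cardinality is maximal. -/
theorem exists_maxIndepFinset_of_card_le (H : SimpleGraph V) (n : ℕ)
    (h : ∀ M, H.IndepFinset M → M.card ≤ n) : ∃ M, H.MaxIndepFinset M := by
  classical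
  set cards := {m | ∃ M, H.IndepFinset M ∧ M.card = m}
  have hne : cards.Nonempty := ⟨0, ∅, by simp [IndepFinset]⟩
  have hbdd : BddAbove cards := ⟨n, by rintro _ ⟨M, hM, rfl⟩; exact h M hM⟩
  obtain ⟨M, hM, hcard⟩ := Nat.sSup_mem hne hbdd
  refine ⟨M, hM, fun v hv => ?_⟩
  by_contra! hfree
  have hins : M.card + 1 ∈ cards := ⟨_, hM.insert hfree, Finset.card_insert_of_notMem hv⟩
  have := le_csSup hbdd hins
  omega

theorem MaxIndepFinset.exists_dist_le {G : SimpleGraph V} {r : ℕ} {M : Finset V}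
    (hM : (G.power r).MaxIndepFinset M) (v : V) :
    ∃ u ∈ M, G.Reachable u v ∧ G.dist u v ≤ r := by
  by_cases hv : v ∈ M
  · exact ⟨v, hv, .refl v, by simp⟩
  · obtain ⟨u, hu, -, hreach, hdist⟩ := hM.2 v hv
    exact ⟨u, hu, hreach, hdist⟩

theorem kBurnableIn.pos [Nonempty V] {G : SimpleGraph V} {k t : ℕ} (h : G.kBurnableIn k t) :
    0 < t := by
  obtain ⟨_, _, hcov⟩ := h
  obtain ⟨i, _⟩ := hcov (Classical.arbitrary V)
  exact i.pos

/-- Two vertices covered by the same source are within distance `2 t` of each other. -/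
theorem IndepFinset.card_le_of_kBurnableIn {G : SimpleGraph V} {k t : ℕ} {M : Finset V}
    (hb : G.kBurnableIn k t) (hM : (G.power (2 * t)).IndepFinset M) : M.card ≤ t * k := by
  classical
  obtain ⟨s, hcard, hcov⟩ := hb
  choose round source hsource hreach hdist using hcov
  have hmaps : Set.MapsTo source M (Finset.univ.biUnion s) := fun v _ =>
    Finset.mem_biUnion.mpr ⟨round v, Finset.mem_univ _, hsource v⟩
  have hinj : Set.InjOn source M := by
    intro a ha b hb hab
    by_contra hne
    have hreach_ab : G.Reachable a b := (hab ▸ (hreach a).symm).trans (hreach b)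
    have htri : G.dist a b ≤ G.dist a (source b) + G.dist (source b) b :=
      (hreach b).dist_triangle_right a
    have hsymm : G.dist a (source b) = G.dist (source a) a := by rw [hab, dist_comm]
    have := hdist a
    have := hdist b
    exact hM a ha b hb ⟨hne, hreach_ab, by omega⟩
  calc M.card ≤ (Finset.univ.biUnion s).card := Finset.card_le_card_of_injOn source hmaps hinj
    _ ≤ Finset.univ.card * k := Finset.card_biUnion_le_card_mul _ _ _ fun i _ => hcard i
    _ = t * k := by rw [Finset.card_univ, Fintype.card_fin]

/-- Lighting the vertices of `S` one per round, each burns for at least `r + 1` rounds. -/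
theorem kBurnableIn_one_card_add {G : SimpleGraph V} (S : Finset V) (r : ℕ)
    (hS : ∀ v, ∃ u ∈ S, G.Reachable u v ∧ G.dist u v ≤ r) : G.kBurnableIn 1 (S.card + r) := by
  refine ⟨fun i => if h : i.val < S.card then {(S.equivFin.symm ⟨i, h⟩ : V)} else ∅, ?_, ?_⟩
  · intro i
    dsimp only
    split_ifs <;> simp
  · intro v
    obtain ⟨u, hu, hreach, hdist⟩ := hS v
    set i := S.equivFin ⟨u, hu⟩
    refine ⟨⟨i, by omega⟩, u, ?_, hreach, by dsimp only; omega⟩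
    simp [i]

end SimpleGraph

theorem stmt7_general {V : Type*} (G : SimpleGraph V)
    (hconn : G.Connected) (j : ℕ)
    (M : Finset V) (hM : (G.power (2 * j)).MaxIndepFinset M) (hMcard : M.card ≤ j)
    (hmin : ∀ j', 0 < j' → j' < j → ∀ M' : Finset V,
      (G.power (2 * j')).MaxIndepFinset M' → j' < M'.card) :
    j ≤ G.burningNumber 1 ∧ G.kBurnableIn 1 (M.card + 2 * j) ∧
      M.card + 2 * j ≤ 3 * j ∧ 3 * j ≤ 3 * G.burningNumber 1 := by
  have : Nonempty V := hconn.nonempty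
  have hburn : G.kBurnableIn 1 (M.card + 2 * j) :=
    SimpleGraph.kBurnableIn_one_card_add M _ hM.exists_dist_le
  have hlb : j ≤ G.burningNumber 1 := by
    refine le_csInf ⟨_, hburn⟩ fun t (ht : G.kBurnableIn 1 t) => ?_
    by_contra! hlt
    have hsmall : ∀ M', (G.power (2 * t)).IndepFinset M' → M'.card ≤ t := fun M' hM' => by
      simpa using hM'.card_le_of_kBurnableIn ht
    obtain ⟨M', hM'⟩ := G.power (2 * t) |>.exists_maxIndepFinset_of_card_le t hsmall
    have hbig := hmin t ht.pos hlt M' hM'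
    have hle := hsmall M' hM'.1
    omega
  exact ⟨hlb, hburn, by omega, by omega⟩

/-- if `j` is the smallest positive integer admitting a maximal
independent set `M` of `G^{2j}` with `|M| ≤ j`, then `j ≤ b(G)` and burning the
vertices of `M` as sources burns `G` within `|M| + 2j ≤ 3j ≤ 3 b(G)` rounds. -/
theorem stmt7 {V : Type*} [Fintype V] [DecidableEq V] (G : SimpleGraph V)
    (hconn : G.Connected) (j : ℕ) (hj : 0 < j)
    (M : Finset V) (hM : (G.power (2 * j)).MaxIndepFinset M) (hMcard : M.card ≤ j)
    (hmin : ∀ j', 0 < j' → j' < j → ∀ M' : Finset V,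
      (G.power (2 * j')).MaxIndepFinset M' → j' < M'.card) :
    j ≤ G.burningNumber 1 ∧ G.kBurnableIn 1 (M.card + 2 * j) ∧
      M.card + 2 * j ≤ 3 * j ∧ 3 * j ≤ 3 * G.burningNumber 1 :=
  stmt7_general G hconn j M hM hMcard hmin
end

section
/- If G is a path on n vertices, then the k-burning number of G is exactly ⌈√(n/k)⌉, i.e., b_k(G) = ⌈√(n/k)⌉. -/
open Finset

theorem Fin.card_filter_natDist_le (n c r : ℕ) : #{v : Fin n | Nat.dist c v ≤ r} ≤ 2 * r + 1 := by
  calc #{v : Fin n | Nat.dist c v ≤ r} ≤ #(Icc (c - r) (c + r)) := by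
        refine card_le_card_of_injOn Fin.val (fun v hv => ?_) Fin.val_injective.injOn
        simp only [coe_filter, mem_univ, true_and, Set.mem_ofPred_eq] at hv
        simp only [coe_Icc, Set.mem_Icc]
        unfold Nat.dist at hv
        omega
    _ ≤ 2 * r + 1 := by rw [Nat.card_Icc]; omega

theorem Fin.sum_odd_rev_eq_sq (t : ℕ) : ∑ i : Fin t, (2 * (t - 1 - i) + 1) = t ^ 2 := by
  induction t with
  | zero => simp
  | succ t ih =>
    rw [Fin.sum_univ_succ]
    simp only [Fin.val_zero, Fin.val_succ]
    rw [show ∑ i : Fin t, (2 * (t + 1 - 1 - (i + 1)) + 1) = ∑ i : Fin t, (2 * (t - 1 - i) + 1) from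
      sum_congr rfl fun i _ => by omega, ih]
    ring_nf; omega

theorem exists_natDist_cover_lt_mul_sq (k t : ℕ) : ∃ s : Fin t → Finset ℕ, (∀ i, #(s i) ≤ k) ∧
    ∀ v < k * t ^ 2, ∃ i : Fin t, ∃ u ∈ s i, Nat.dist u v ≤ t - 1 - i := by
  induction t with
  | zero => exact ⟨Fin.elim0, fun i => i.elim0, by simp⟩
  | succ t ih =>
    obtain ⟨s, hcard, hcover⟩ := ih
    -- Round 0 tiles `[0, k * m)` with `k` balls of radius `t`; the later rounds are the
    -- cover for `t` rounds, shifted right by `k * m`.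
    let m := 2 * t + 1
    refine ⟨Fin.cons ((range k).image (m * · + t)) (fun i => (s i).map (addRightEmbedding (k * m))),
      fun i => ?_, fun v hv => ?_⟩
    · cases i using Fin.cases with
      | zero => simpa using card_image_le.trans (card_range k).le
      | succ i => simpa using hcard i
    by_cases hv' : v < k * m
    · have hq : v / m < k := Nat.div_lt_of_lt_mul (by rwa [mul_comm])
      have hr : v % m < m := Nat.mod_lt _ (by omega)
      have hv_eq := Nat.div_add_mod v m
      refine ⟨0, m * (v / m) + t, by simpa using hq, ?_⟩
      simp only [Fin.val_zero]
      unfold Nat.dist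
      omega
    · have hsq : k * (t + 1) ^ 2 = k * m + k * t ^ 2 := by ring
      obtain ⟨i, u, hu, hd⟩ := hcover (v - k * m) (by omega)
      refine ⟨i.succ, u + k * m, by simpa using hu, ?_⟩
      simp only [Fin.val_succ]
      unfold Nat.dist at hd ⊢
      omega

namespace SimpleGraph

theorem natDist_le_length_of_walk_pathGraph {n : ℕ} {u v : Fin n} (w : (pathGraph n).Walk u v) :
    Nat.dist u v ≤ w.length := by
  induction w with
  | nil => simp [Nat.dist]
  | cons h _ ih =>
    rw [pathGraph_adj] at h
    simp only [Walk.length_cons]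
    unfold Nat.dist at ih ⊢
    omega

theorem pathGraph_dist_le_of_add_eq {n : ℕ} (d : ℕ) :
    ∀ {u v : Fin n}, u.val + d = v → (pathGraph n).dist u v ≤ d := by
  induction d with
  | zero =>
    intro u v h
    obtain rfl : u = v := Fin.ext (by omega)
    simp
  | succ d ih =>
    intro u v h
    let u' : Fin n := ⟨u + 1, by omega⟩
    have hadj : (pathGraph n).Adj u u' := pathGraph_adj.2 (.inl rfl)
    obtain ⟨w, hw⟩ := (pathGraph_preconnected n u' v).exists_walk_length_eq_dist
    calc (pathGraph n).dist u v ≤ (Walk.cons hadj w).length := dist_le _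
      _ ≤ d + 1 := by simpa [hw] using ih (u := u') (v := v) (by simp [u']; omega)

theorem pathGraph_dist {n : ℕ} (u v : Fin n) : (pathGraph n).dist u v = Nat.dist u v := by
  refine le_antisymm ?_ ?_
  · rcases le_total u v with h | h
    · exact pathGraph_dist_le_of_add_eq _ (by rw [Nat.dist_eq_sub_of_le h]; omega)
    · rw [dist_comm, Nat.dist_comm]
      exact pathGraph_dist_le_of_add_eq _ (by rw [Nat.dist_eq_sub_of_le h]; omega)
  · obtain ⟨w, hw⟩ := (pathGraph_preconnected n u v).exists_walk_length_eq_dist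
    exact hw ▸ natDist_le_length_of_walk_pathGraph w

theorem pathGraph_kBurnableIn_iff_natDist {n k t : ℕ} :
    (pathGraph n).kBurnableIn k t ↔ ∃ s : Fin t → Finset (Fin n), (∀ i, #(s i) ≤ k) ∧
      ∀ v : Fin n, ∃ i : Fin t, ∃ u ∈ s i, Nat.dist u v ≤ t - 1 - i := by
  simp [kBurnableIn, pathGraph_dist, pathGraph_preconnected n _ _]

theorem le_mul_sq_of_pathGraph_kBurnableIn {n k t : ℕ} (h : (pathGraph n).kBurnableIn k t) :
    n ≤ k * t ^ 2 := by
  classical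
  obtain ⟨s, hcard, hcover⟩ := pathGraph_kBurnableIn_iff_natDist.1 h
  let ball (i : Fin t) (u : Fin n) : Finset (Fin n) := {v | Nat.dist u v ≤ t - 1 - i}
  calc n = #(univ : Finset (Fin n)) := by simp
    _ ≤ #(univ.biUnion fun i => (s i).biUnion (ball i)) :=
        card_le_card fun v _ => by simpa [ball] using hcover v
    _ ≤ ∑ i, ∑ u ∈ s i, #(ball i u) :=
        card_biUnion_le.trans (sum_le_sum fun i _ => card_biUnion_le)
    _ ≤ ∑ i : Fin t, ∑ _u ∈ s i, (2 * (t - 1 - i) + 1) := by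
        gcongr with i _ u
        exact Fin.card_filter_natDist_le n u _
    _ ≤ ∑ i : Fin t, k * (2 * (t - 1 - i) + 1) := by
        gcongr with i
        rw [sum_const, smul_eq_mul]
        exact Nat.mul_le_mul_right _ (hcard i)
    _ = k * t ^ 2 := by rw [← mul_sum, Fin.sum_odd_rev_eq_sq]

theorem pathGraph_kBurnableIn_of_le_mul_sq {n k t : ℕ} (h : n ≤ k * t ^ 2) :
    (pathGraph n).kBurnableIn k t := by
  obtain _ | m := n
  · exact ⟨fun _ => ∅, by simp, fun v => v.elim0⟩
  obtain ⟨s, hcard, hcover⟩ := exists_natDist_cover_lt_mul_sq k t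
  refine pathGraph_kBurnableIn_iff_natDist.2
    ⟨fun i => (s i).image (Fin.clamp · m), fun i => card_image_le.trans (hcard i), fun v => ?_⟩
  obtain ⟨i, u, hu, hd⟩ := hcover v (by omega)
  refine ⟨i, Fin.clamp u m, mem_image_of_mem _ hu, ?_⟩
  -- Clamping a source to the last vertex does not move it away from any vertex.
  have := v.is_lt
  simp only [Fin.coe_clamp]
  unfold Nat.dist at hd ⊢
  omega

theorem pathGraph_kBurnableIn_iff {n k t : ℕ} :
    (pathGraph n).kBurnableIn k t ↔ n ≤ k * t ^ 2 :=
  ⟨le_mul_sq_of_pathGraph_kBurnableIn, pathGraph_kBurnableIn_of_le_mul_sq⟩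

end SimpleGraph

theorem ceil_sqrt_div_le_iff {n k : ℕ} (hk : 0 < k) (t : ℕ) :
    ⌈Real.sqrt ((n : ℝ) / (k : ℝ))⌉₊ ≤ t ↔ n ≤ k * t ^ 2 := by
  rw [Nat.ceil_le, Real.sqrt_le_left (Nat.cast_nonneg t), div_le_iff₀ (by positivity),
    ← Nat.cast_le (α := ℝ)]
  push_cast
  rw [mul_comm]

/-- the `k`-burning number of the path on `n` vertices is exactly
`⌈√(n/k)⌉`. -/
theorem stmt11 (n k : ℕ) (hk : 0 < k) :
    (SimpleGraph.pathGraph n).burningNumber k = ⌈Real.sqrt ((n : ℝ) / (k : ℝ))⌉₊ := by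
  have hburnable : {t | (SimpleGraph.pathGraph n).kBurnableIn k t} = Set.Ici ⌈Real.sqrt (n / k)⌉₊ := by
    ext t
    rw [Set.mem_ofPred_eq, SimpleGraph.pathGraph_kBurnableIn_iff, Set.mem_Ici,
      ceil_sqrt_div_le_iff hk]
  rw [SimpleGraph.burningNumber, hburnable, csInf_Ici]
end
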